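/- For every natural number n, the map ψ restricts to a bijection from the set of area sequences of size n onto the set of area sequences of size n. -/

import Mathlib

/-- The `i`-th letter of the word `w` (`1`-indexed, as in the paper);
defaults to `0` out of range. -/
def get1 (w : List ℕ) (i : ℕ) : ℕ := w.getD (i - 1) 0

/-- `w` is the area sequence of a Dyck path: the first letter is `0` and each
letter exceeds the previous one by at most one. -/
def IsAreaSeq (w : List ℕ) : Prop :=
  (w ≠ [] → get1 w 1 = 0) ∧ ∀ i, 1 ≤ i → i < w.length → get1 w (i + 1) ≤ get1 w i + 1

/-- Insertion at position `i` (for `0 ≤ i ≤ n`): `ins w 0` prepends a `0`, and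
for `1 ≤ i ≤ n`, `ins w i` inserts the letter `w_i + 1` just after position `i`. -/
def ins (w : List ℕ) (i : ℕ) : List ℕ :=
  w.take i ++ (if i = 0 then 0 else get1 w i + 1) :: w.drop i

/-- The area statistic: the sum of the letters. -/
def area (w : List ℕ) : ℕ := w.sum

/-- The dinv statistic: `dinv w = Σ_i d_i` where `d_i` is the number of `j > i`
with `w_j = w_i` or `w_j = w_i - 1`. -/
def dinv (w : List ℕ) : ℕ :=
  ∑ i ∈ Finset.Icc 1 w.length,
    ((Finset.Ioc i w.length).filter
      (fun j => get1 w j = get1 w i ∨ get1 w j + 1 = get1 w i)).card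

/-- The maximal value of a word (`0` for the empty word). -/
def maxVal (w : List ℕ) : ℕ := w.foldr max 0

/-- Positions of the letters of maximal value `m`. -/
def Maxb (w : List ℕ) : Finset ℕ :=
  (Finset.Icc 1 w.length).filter (fun i => get1 w i = maxVal w)

/-- Positions `i` with `w_i = m - 1` such that all letters after position `i`
are `< m`. -/
def Maxa (w : List ℕ) : Finset ℕ :=
  (Finset.Icc 1 w.length).filter (fun i =>
    get1 w i + 1 = maxVal w ∧ ∀ j ∈ Finset.Ioc i w.length, get1 w j < maxVal w)

/-- The position of the leftmost letter equal to the maximal value `m` in the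
rightmost block of consecutive letters equal to `m`. -/
def i0 (w : List ℕ) : ℕ :=
  ((Finset.Icc 1 w.length).filter (fun i =>
    get1 w i = maxVal w ∧ (i = 1 ∨ get1 w (i - 1) ≠ maxVal w))).sup id

/-- The admissible insertion positions of `w`, listed in admissible order:
the elements of `Maxb w` in decreasing order, then the elements of `Maxa w`
in decreasing order, then `i0 w - 1`.  The empty word has the single
admissible insertion position `0`. -/
def admissible (w : List ℕ) : List ℕ :=
  if w = [] then [0]
  else ((Maxb w).sort (· ≤ ·)).reverse ++ ((Maxa w).sort (· ≤ ·)).reverse ++ [i0 w - 1]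

/-- Auxiliary version of the map `ψ`, reading the reversed word. -/
def psiRev : List ℕ → List ℕ
  | [] => []
  | a :: u => ins (psiRev u) ((admissible (psiRev u)).getD a 0)

/-- The map `ψ`: `ψ(ε) = ε` and `ψ(u a) = ins_{c_a}(ψ(u))` where
`c_0, c_1, …, c_k` are the admissible insertion positions of `ψ(u)` in
admissible order. -/
def psi (w : List ℕ) : List ℕ := psiRev w.reverse

/-- The bounce sequence: `b_1 = 0`, and `b_i = b_{i-1} + 1` if
`b_{i-1} + 1 ≤ w_i`, otherwise `b_i = 0`. -/
def bseq (w : List ℕ) : ℕ → ℕ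
  | 0 => 0
  | 1 => 0
  | (i + 2) => if bseq w (i + 1) + 1 ≤ get1 w (i + 2) then bseq w (i + 1) + 1 else 0

/-- The bounces of `w`: positions `1 < i ≤ n` with `b_i = 0`. -/
def bounces (w : List ℕ) : Finset ℕ :=
  (Finset.Icc 2 w.length).filter (fun i => bseq w i = 0)

/-- The bounce statistic: the sum of the reversed positions `n - i + 1` of the
bounces of `w`. -/
def bounce (w : List ℕ) : ℕ := ∑ i ∈ bounces w, (w.length - i + 1)

/-!
Each step of `ψ` inserts a letter at an admissible position `c` of the current word `v`, and in
every one of the three kinds of admissible position the inserted letter becomes the leftmost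
letter of the rightmost block of maximal letters. So `c = i0 (ins v c) - 1` can be read off the
result, and `v` is recovered by deleting that letter. Moreover, if `c` is the `k`-th admissible
position of `v` (counting from `0`), then `ins v c` has exactly `k + 2` admissible positions.
Hence the letters `0, …, a + 1` that may follow a last letter `a` of an area sequence index
distinct admissible positions of its image, and `ψ` is injective on area sequences. As it
preserves area sequences and their length, and there are finitely many of each length, it is a
bijection.
-/

open Finset

lemma List.idxOf_eq_length_filter_gt {α : Type*} [LinearOrder α] {L : List α}
    (hL : L.Pairwise (· > ·)) {c : α} (hc : c ∈ L) :
    L.idxOf c = (L.filter (c < ·)).length := by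
  induction L with
  | nil => simp at hc
  | cons x t ih =>
    rw [List.pairwise_cons] at hL
    rcases eq_or_ne x c with rfl | hxc
    · rw [List.idxOf_cons_self,
        List.filter_eq_nil_iff.2 (by simpa using fun b hb => (hL.1 b hb).le)]
      rfl
    · have hct : c ∈ t := (List.mem_cons.1 hc).resolve_left hxc.symm
      rw [List.idxOf_cons_ne _ hxc, ih hL.2 hct,
        List.filter_cons_of_pos (by simpa using hL.1 c hct), List.length_cons]

lemma Finset.idxOf_sort_reverse {α : Type*} [LinearOrder α] (s : Finset α) {c : α}
    (hc : c ∈ s) :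
    ((s.sort (· ≤ ·)).reverse).idxOf c = (s.filter (c < ·)).card := by
  rw [List.idxOf_eq_length_filter_gt (List.pairwise_reverse.2 (sortedLT_sort s).pairwise)
    (by simpa using hc), List.filter_reverse, List.length_reverse, ← Multiset.coe_card,
    ← Multiset.filter_coe, sort_eq, card_def, filter_val]

lemma List.Nodup.idxOf_getD {α : Type*} [DecidableEq α] {l : List α} (hl : l.Nodup)
    {a : ℕ} {d : α} (ha : a < l.length) : l.idxOf (l.getD a d) = a := by
  rw [List.getD_eq_getElem _ _ ha, hl.idxOf_getElem]

lemma List.getD_mem_of_lt {α : Type*} {l : List α} {a : ℕ} {d : α} (ha : a < l.length) :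
    l.getD a d ∈ l := by
  rw [List.getD_eq_getElem _ _ ha]
  exact List.getElem_mem ha

def insLetter (w : List ℕ) (i : ℕ) : ℕ := if i = 0 then 0 else get1 w i + 1

section Insertion

variable {w : List ℕ} {c j : ℕ}

lemma ins_eq (w : List ℕ) (c : ℕ) : ins w c = w.take c ++ insLetter w c :: w.drop c := rfl

lemma ins_perm (w : List ℕ) (c : ℕ) : (ins w c).Perm (insLetter w c :: w) := by
  rw [ins_eq]
  simpa only [List.take_append_drop] using List.perm_middle (l₁ := w.take c) (l₂ := w.drop c)

lemma length_ins (hc : c ≤ w.length) : (ins w c).length = w.length + 1 := by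
  rw [ins_eq, List.length_append, List.length_take_of_le hc, List.length_cons, List.length_drop]
  omega

lemma eraseIdx_ins (hc : c ≤ w.length) : (ins w c).eraseIdx c = w := by
  rw [ins_eq, List.eraseIdx_append_of_length_le (by simp [hc]),
    List.length_take_of_le hc, Nat.sub_self, List.eraseIdx_cons_zero, List.take_append_drop]

lemma get1_ins_of_le (hc : c ≤ w.length) (hj : 1 ≤ j) (hjc : j ≤ c) :
    get1 (ins w c) j = get1 w j := by
  unfold get1
  rw [ins_eq, List.getD_append _ _ _ _ (by rw [List.length_take_of_le hc]; omega),
    List.getD_eq_getElem?_getD,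
    List.getD_eq_getElem?_getD, List.getElem?_take_of_lt (by omega)]

lemma get1_ins_succ (hc : c ≤ w.length) : get1 (ins w c) (c + 1) = insLetter w c := by
  unfold get1
  rw [ins_eq, List.getD_append_right _ _ _ _ (by simp), List.length_take_of_le hc]
  simp

lemma get1_ins_of_lt (hc : c ≤ w.length) (hj : c + 1 < j) :
    get1 (ins w c) j = get1 w (j - 1) := by
  unfold get1
  rw [ins_eq, List.getD_append_right _ _ _ _ (by rw [List.length_take_of_le hc]; omega),
    List.length_take_of_le hc,
    show j - 1 - c = (j - 2 - c) + 1 by omega, List.getD_cons_succ, List.getD_eq_getElem?_getD,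
    List.getD_eq_getElem?_getD, List.getElem?_drop]
  congr 2
  omega

end Insertion

section MaxVal

variable {w : List ℕ}

lemma le_maxVal {x : ℕ} (h : x ∈ w) : x ≤ maxVal w := by
  induction w with
  | nil => simp at h
  | cons a t ih =>
    rcases List.mem_cons.1 h with rfl | h
    · exact le_max_left _ _
    · exact (ih h).trans (le_max_right _ _)

lemma maxVal_mem (hw : w ≠ []) : maxVal w ∈ w := by
  induction w with
  | nil => contradiction
  | cons a t ih =>
    rcases eq_or_ne t [] with rfl | ht
    · simp [maxVal]
    · change max a (maxVal t) ∈ a :: t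
      rcases max_choice a (maxVal t) with h | h <;> rw [h]
      · exact List.mem_cons_self
      · exact List.mem_cons_of_mem a (ih ht)

lemma get1_le_maxVal (w : List ℕ) (i : ℕ) : get1 w i ≤ maxVal w := by
  unfold get1
  rw [List.getD_eq_getElem?_getD]
  cases h : w[i - 1]? with
  | none => exact Nat.zero_le _
  | some x => exact le_maxVal (List.mem_of_getElem? h)

lemma maxVal_ins (w : List ℕ) (c : ℕ) :
    maxVal (ins w c) = max (insLetter w c) (maxVal w) :=
  (ins_perm w c).foldr_eq 0

end MaxVal

section AreaSeq

variable {w u t : List ℕ} {a c i : ℕ}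

lemma isAreaSeq_ins (hw : IsAreaSeq w) (hc : c ≤ w.length) : IsAreaSeq (ins w c) := by
  obtain ⟨hfirst, hstep⟩ := hw
  have hx : insLetter w c = if c = 0 then 0 else get1 w c + 1 := rfl
  have hfirst' : 0 < w.length → get1 w 1 = 0 := fun h => hfirst (List.ne_nil_of_length_pos h)
  refine ⟨fun _ => ?_, fun i hi1 hi => ?_⟩
  · rcases Nat.eq_zero_or_pos c with rfl | hc0
    · simpa [hx] using get1_ins_succ hc
    · rw [get1_ins_of_le hc le_rfl hc0]
      exact hfirst' (by omega)
  rw [length_ins hc] at hi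
  obtain h | rfl | rfl | h : i < c ∨ i = c ∨ i = c + 1 ∨ c + 1 < i := by omega
  · rw [get1_ins_of_le hc (by omega) h, get1_ins_of_le hc hi1 h.le]
    exact hstep i hi1 (by omega)
  · rw [get1_ins_succ hc, get1_ins_of_le hc hi1 le_rfl, hx, if_neg (by omega)]
  · rw [get1_ins_of_lt hc (by omega), get1_ins_succ hc, Nat.add_sub_cancel, hx]
    split_ifs with hc0
    · subst hc0
      rw [hfirst' (by omega)]
      omega
    · have := hstep c (by omega) (by omega)
      omega
  · rw [get1_ins_of_lt hc (by omega), get1_ins_of_lt hc h]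
    simpa [show i - 1 + 1 = i by omega] using hstep (i - 1) (by omega) (by omega)

lemma get1_append_of_le (h1 : 1 ≤ i) (h2 : i ≤ u.length) : get1 (u ++ t) i = get1 u i := by
  unfold get1
  rw [List.getD_append _ _ _ _ (by omega)]

lemma get1_concat_length (u : List ℕ) (a : ℕ) : get1 (u ++ [a]) (u.length + 1) = a := by
  simp [get1]

lemma IsAreaSeq.of_append (h : IsAreaSeq (u ++ t)) : IsAreaSeq u := by
  refine ⟨fun hu => ?_, fun i hi1 hi => ?_⟩
  · have hlen := List.length_pos_of_ne_nil hu
    rw [← get1_append_of_le le_rfl hlen]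
    exact h.1 (by simp [hu])
  · rw [← get1_append_of_le hi1 hi.le, ← get1_append_of_le (t := t) (by omega) hi]
    exact h.2 i hi1 (by rw [List.length_append]; omega)

lemma IsAreaSeq.le_succ_of_append_singleton (h : IsAreaSeq (u ++ [a])) (hu : u ≠ []) :
    a ≤ get1 u u.length + 1 := by
  have hlen := List.length_pos_of_ne_nil hu
  have := h.2 u.length hlen (by simp)
  rwa [get1_concat_length, get1_append_of_le hlen le_rfl] at this

lemma IsAreaSeq.eq_zero_of_singleton (h : IsAreaSeq [a]) : a = 0 :=
  h.1 (List.cons_ne_nil a [])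

lemma IsAreaSeq.get1_le_pred (hw : IsAreaSeq w) (h1 : 1 ≤ i) (h2 : i ≤ w.length) :
    get1 w i ≤ i - 1 := by
  induction i with
  | zero => omega
  | succ i ih =>
    rcases Nat.eq_zero_or_pos i with rfl | hi
    · rw [hw.1 (List.ne_nil_of_length_pos h2)]
    · have := hw.2 i hi (by omega)
      have := ih hi (by omega)
      omega

lemma IsAreaSeq.lt_length_of_mem (hw : IsAreaSeq w) {x : ℕ} (hx : x ∈ w) : x < w.length := by
  obtain ⟨k, hk, rfl⟩ := List.mem_iff_getElem.1 hx
  have := hw.get1_le_pred (i := k + 1) (by omega) hk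
  rw [get1, Nat.add_sub_cancel, List.getD_eq_getElem _ _ hk] at this
  omega

end AreaSeq

section Positions

variable {v w : List ℕ} {c i m : ℕ}

lemma card_filter_get1_eq_count (w : List ℕ) (y : ℕ) :
    ((Icc 1 w.length).filter (fun i => get1 w i = y)).card = w.count y := by
  induction w using List.reverseRecOn with
  | nil => rfl
  | append_singleton u a ih =>
    have hu : (Icc 1 u.length).filter (fun i => get1 (u ++ [a]) i = y) =
        (Icc 1 u.length).filter (fun i => get1 u i = y) :=
      filter_congr fun i hi => by rw [get1_append_of_le (mem_Icc.1 hi).1 (mem_Icc.1 hi).2]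
    rw [List.length_append, List.length_singleton,
      ← insert_Icc_right_eq_Icc_add_one (by omega), filter_insert, get1_concat_length, hu,
      List.count_append, List.count_singleton, ← ih]
    split_ifs with h <;> simp_all

lemma card_Maxb (w : List ℕ) : (Maxb w).card = w.count (maxVal w) :=
  card_filter_get1_eq_count w _

lemma mem_Maxb : i ∈ Maxb w ↔ (1 ≤ i ∧ i ≤ w.length) ∧ get1 w i = maxVal w := by
  simp [Maxb]

/-- `Maxa` with respect to a prescribed maximum `m`: inserting `maxVal v + 1` into `v` raises the
maximum, and the new `Maxa` then comes from `MaxaAt v (maxVal v + 1) = Maxb v`. -/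
def MaxaAt (w : List ℕ) (m : ℕ) : Finset ℕ :=
  (Icc 1 w.length).filter (fun i => get1 w i + 1 = m ∧ ∀ j ∈ Ioc i w.length, get1 w j < m)

lemma Maxa_eq_MaxaAt (w : List ℕ) : Maxa w = MaxaAt w (maxVal w) := rfl

lemma mem_MaxaAt : i ∈ MaxaAt w m ↔ (1 ≤ i ∧ i ≤ w.length) ∧ get1 w i + 1 = m ∧
    ∀ j, i < j → j ≤ w.length → get1 w j < m := by
  simp [MaxaAt]

lemma mem_Maxa : i ∈ Maxa w ↔ (1 ≤ i ∧ i ≤ w.length) ∧ get1 w i + 1 = maxVal w ∧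
    ∀ j, i < j → j ≤ w.length → get1 w j < maxVal w :=
  mem_MaxaAt

lemma MaxaAt_ins (hc : c ≤ v.length) :
    MaxaAt (ins v c) (insLetter v c) =
      ((MaxaAt v (insLetter v c)).filter (c < ·)).map (addRightEmbedding 1) := by
  ext j
  simp only [mem_map, mem_filter, mem_MaxaAt, addRightEmbedding_apply, length_ins hc]
  constructor
  · rintro ⟨⟨hj1, hj⟩, hval, hafter⟩
    have hcj : c + 1 < j := by
      by_contra
      obtain h | rfl : j ≤ c ∨ j = c + 1 := by omega
      · have := hafter (c + 1) (by omega) (by omega)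
        rw [get1_ins_succ hc] at this
        omega
      · rw [get1_ins_succ hc] at hval
        omega
    refine ⟨j - 1, ⟨⟨⟨by omega, by omega⟩, by rwa [← get1_ins_of_lt hc hcj],
      fun k hk1 hk2 => ?_⟩, by omega⟩, by omega⟩
    simpa [get1_ins_of_lt hc (show c + 1 < k + 1 by omega)] using
      hafter (k + 1) (by omega) (by omega)
  · rintro ⟨i, ⟨⟨⟨hi1, hi⟩, hval, hafter⟩, hci⟩, rfl⟩
    refine ⟨⟨by omega, by omega⟩, by rwa [get1_ins_of_lt hc (by omega), Nat.add_sub_cancel],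
      fun k hk1 hk2 => ?_⟩
    rw [get1_ins_of_lt hc (by omega)]
    exact hafter (k - 1) (by omega) (by omega)

def maxBlockStarts (w : List ℕ) : Finset ℕ :=
  (Icc 1 w.length).filter (fun i => get1 w i = maxVal w ∧ (i = 1 ∨ get1 w (i - 1) ≠ maxVal w))

lemma mem_maxBlockStarts : i ∈ maxBlockStarts w ↔ (1 ≤ i ∧ i ≤ w.length) ∧
    get1 w i = maxVal w ∧ (i = 1 ∨ get1 w (i - 1) ≠ maxVal w) := by
  simp [maxBlockStarts]

lemma le_i0 (h : i ∈ maxBlockStarts w) : i ≤ i0 w :=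
  le_sup (f := id) h

lemma i0_le {p : ℕ} (h : ∀ i ∈ maxBlockStarts w, i ≤ p) : i0 w ≤ p :=
  Finset.sup_le h

lemma maxBlockStarts_nonempty (hw : w ≠ []) : (maxBlockStarts w).Nonempty := by
  obtain ⟨k, hk, hkm⟩ := List.mem_iff_getElem.1 (maxVal_mem hw)
  have hex : ∃ i, 1 ≤ i ∧ i ≤ w.length ∧ get1 w i = maxVal w :=
    ⟨k + 1, by omega, hk, by simp [get1, hk, hkm]⟩
  obtain ⟨h1, h2, h3⟩ := Nat.find_spec hex
  refine ⟨Nat.find hex, mem_maxBlockStarts.2 ⟨⟨h1, h2⟩, h3, ?_⟩⟩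
  by_contra! h
  exact Nat.find_min hex (show Nat.find hex - 1 < Nat.find hex by omega)
    ⟨by omega, by omega, h.2⟩

lemma i0_mem_maxBlockStarts (hw : w ≠ []) : i0 w ∈ maxBlockStarts w := by
  obtain ⟨i, hi, h⟩ := exists_mem_eq_sup _ (maxBlockStarts_nonempty hw) id
  change (maxBlockStarts w).sup id ∈ _
  rw [h]
  exact hi

lemma i0_le_length (w : List ℕ) : i0 w ≤ w.length :=
  i0_le fun _ hi => (mem_maxBlockStarts.1 hi).1.2

lemma i0_ins (hc : c ≤ v.length) (hx : insLetter v c = maxVal (ins v c))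
    (hleft : c = 0 ∨ get1 v c ≠ insLetter v c)
    (hright : ∀ i, c + 1 < i → i ≤ v.length → get1 v i = insLetter v c →
      get1 v (i - 1) = insLetter v c) :
    i0 (ins v c) = c + 1 := by
  refine le_antisymm (i0_le fun j hj => ?_)
    (le_i0 (mem_maxBlockStarts.2 ⟨⟨by omega, ?_⟩, ?_, ?_⟩))
  · obtain ⟨⟨hj1, hj⟩, hval, hstart⟩ := mem_maxBlockStarts.1 hj
    rw [length_ins hc] at hj
    by_contra! hcj
    rw [get1_ins_of_lt hc hcj, ← hx] at hval
    rcases hstart with h | h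
    · omega
    · rw [← hx] at h
      obtain rfl | hcj' : j = c + 2 ∨ c + 2 < j := by omega
      · exact h (get1_ins_succ hc)
      · rw [get1_ins_of_lt hc (by omega)] at h
        exact h (hright (j - 1) (by omega) (by omega) hval)
  · rw [length_ins hc]; omega
  · rw [get1_ins_succ hc, hx]
  · rw [← hx, Nat.add_sub_cancel]
    rcases Nat.eq_zero_or_pos c with rfl | hc0
    · exact Or.inl rfl
    · rw [get1_ins_of_le hc hc0 le_rfl]
      exact Or.inr (hleft.resolve_left hc0.ne')

end Positions

section Admissible

variable {v w : List ℕ} {c i : ℕ}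

lemma notMem_Maxa_of_mem_Maxb (h : i ∈ Maxb w) : i ∉ Maxa w := fun h' => by
  have := (mem_Maxb.1 h).2
  have := (mem_Maxa.1 h').2.1
  omega

lemma pred_i0_notMem_Maxb (hw : w ≠ []) : i0 w - 1 ∉ Maxb w := fun h => by
  obtain ⟨⟨h1, -⟩, hval⟩ := mem_Maxb.1 h
  obtain ⟨-, -, hstart⟩ := mem_maxBlockStarts.1 (i0_mem_maxBlockStarts hw)
  rcases hstart with h | h
  · omega
  · exact h hval

lemma pred_i0_notMem_Maxa (hw : w ≠ []) : i0 w - 1 ∉ Maxa w := fun h => by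
  obtain ⟨⟨hi0, hlen⟩, hval, -⟩ := mem_maxBlockStarts.1 (i0_mem_maxBlockStarts hw)
  have := (mem_Maxa.1 h).2.2 (i0 w) (by omega) hlen
  omega

lemma mem_admissible (hw : w ≠ []) :
    c ∈ admissible w ↔ c ∈ Maxb w ∨ c ∈ Maxa w ∨ c = i0 w - 1 := by
  simp [admissible, hw]

lemma le_length_of_mem_admissible (h : c ∈ admissible w) : c ≤ w.length := by
  rcases eq_or_ne w [] with rfl | hw
  · simp_all [admissible]
  rcases (mem_admissible hw).1 h with h | h | rfl
  · exact (mem_Maxb.1 h).1.2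
  · exact (mem_Maxa.1 h).1.2
  · exact (Nat.sub_le _ _).trans (i0_le_length w)

lemma nodup_admissible (w : List ℕ) : (admissible w).Nodup := by
  rcases eq_or_ne w [] with rfl | hw
  · simp [admissible]
  simp only [admissible, if_neg hw, List.append_assoc, List.nodup_append, List.nodup_reverse,
    sort_nodup, List.nodup_singleton, List.mem_append, List.mem_reverse, mem_sort,
    List.mem_singleton, true_and]
  refine ⟨fun a ha b hb hab => ?_, fun a ha b hb hab => ?_⟩
  · exact pred_i0_notMem_Maxa hw (hb ▸ hab ▸ ha)
  · subst hab
    rcases hb with hb | rfl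
    · exact notMem_Maxa_of_mem_Maxb ha hb
    · exact pred_i0_notMem_Maxb hw ha

lemma length_admissible (hw : w ≠ []) :
    (admissible w).length = (Maxb w).card + (Maxa w).card + 1 := by
  simp only [admissible, if_neg hw, List.length_append, List.length_reverse, length_sort,
    List.length_singleton]

lemma length_admissible_ins (hc : c ≤ v.length) (hx : insLetter v c = maxVal (ins v c)) :
    (admissible (ins v c)).length =
      v.count (insLetter v c) + ((MaxaAt v (insLetter v c)).filter (c < ·)).card + 2 := by
  rw [length_admissible (List.ne_nil_of_length_pos (by rw [length_ins hc]; omega)), card_Maxb,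
    Maxa_eq_MaxaAt, ← hx, MaxaAt_ins hc, card_map, (ins_perm v c).count_eq, List.count_cons_self]
  omega

lemma idxOf_admissible_of_mem_Maxb (h : c ∈ Maxb w) :
    (admissible w).idxOf c = ((Maxb w).filter (c < ·)).card := by
  have hw : w ≠ [] := List.ne_nil_of_length_pos (by have := (mem_Maxb.1 h).1; omega)
  rw [admissible, if_neg hw, List.append_assoc, List.idxOf_append_of_mem (by simpa using h),
    idxOf_sort_reverse _ h]

lemma idxOf_admissible_of_mem_Maxa (h : c ∈ Maxa w) :
    (admissible w).idxOf c = (Maxb w).card + ((Maxa w).filter (c < ·)).card := by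
  have hw : w ≠ [] := List.ne_nil_of_length_pos (by have := (mem_Maxa.1 h).1; omega)
  rw [admissible, if_neg hw, List.append_assoc,
    List.idxOf_append_of_notMem (by simpa using fun hb => notMem_Maxa_of_mem_Maxb hb h),
    List.idxOf_append_of_mem (by simpa using h), idxOf_sort_reverse _ h, List.length_reverse,
    length_sort]

lemma idxOf_admissible_pred_i0 (hw : w ≠ []) :
    (admissible w).idxOf (i0 w - 1) = (Maxb w).card + (Maxa w).card := by
  rw [admissible, if_neg hw, List.append_assoc,
    List.idxOf_append_of_notMem (by simpa using pred_i0_notMem_Maxb hw),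
    List.idxOf_append_of_notMem (by simpa using pred_i0_notMem_Maxa hw)]
  simp

end Admissible

section Step

variable {v : List ℕ} {c : ℕ}

lemma insLetter_of_mem_Maxb (h : c ∈ Maxb v) : insLetter v c = maxVal v + 1 := by
  obtain ⟨⟨hc, -⟩, hval⟩ := mem_Maxb.1 h
  rw [insLetter, if_neg (by omega), hval]

lemma insLetter_of_mem_Maxa (h : c ∈ Maxa v) : insLetter v c = maxVal v := by
  obtain ⟨⟨hc, -⟩, hval, -⟩ := mem_Maxa.1 h
  rw [insLetter, if_neg (by omega), hval]

lemma IsAreaSeq.insLetter_pred_i0 (hv : IsAreaSeq v) (hw : v ≠ []) :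
    insLetter v (i0 v - 1) = maxVal v := by
  obtain ⟨⟨hz, hzlen⟩, hval, hstart⟩ := mem_maxBlockStarts.1 (i0_mem_maxBlockStarts hw)
  rw [insLetter]
  split_ifs with hz1
  · rw [← hval, show i0 v = 1 by omega, hv.1 hw]
  · have hstep := hv.2 (i0 v - 1) (by omega) (by omega)
    have := get1_le_maxVal v (i0 v - 1)
    rw [show i0 v - 1 + 1 = i0 v by omega] at hstep
    rcases hstart with h | h <;> omega

lemma insLetter_eq_maxVal_ins (h : maxVal v ≤ insLetter v c) :
    insLetter v c = maxVal (ins v c) := by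
  rw [maxVal_ins, max_eq_left h]

lemma IsAreaSeq.i0_ins_of_mem_admissible (hv : IsAreaSeq v) (hc : c ∈ admissible v) :
    i0 (ins v c) = c + 1 := by
  have hcle := le_length_of_mem_admissible hc
  rcases eq_or_ne v [] with rfl | hw
  · obtain rfl : c = 0 := by simpa [admissible] using hc
    decide
  rcases (mem_admissible hw).1 hc with h | h | rfl
  · have hx := insLetter_of_mem_Maxb h
    refine i0_ins hcle (insLetter_eq_maxVal_ins (by omega)) ?_ fun i _ _ hi => ?_
    · rw [hx, (mem_Maxb.1 h).2]
      omega
    · have := get1_le_maxVal v i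
      omega
  · have hx := insLetter_of_mem_Maxa h
    obtain ⟨-, hval, hafter⟩ := mem_Maxa.1 h
    refine i0_ins hcle (insLetter_eq_maxVal_ins hx.ge) ?_ fun i hci hi hvi => ?_
    · omega
    · have := hafter i (by omega) hi
      omega
  · have hx := hv.insLetter_pred_i0 hw
    obtain ⟨-, -, hstart⟩ := mem_maxBlockStarts.1 (i0_mem_maxBlockStarts hw)
    refine i0_ins hcle (insLetter_eq_maxVal_ins hx.ge) ?_ fun i hci hi hvi => ?_
    · rw [hx]
      rcases hstart with h | h
      · exact Or.inl (by omega)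
      · exact Or.inr h
    · rw [hx] at hvi ⊢
      by_contra h
      have := le_i0 (mem_maxBlockStarts.2 ⟨⟨by omega, hi⟩, hvi, Or.inr h⟩)
      omega

lemma IsAreaSeq.length_admissible_ins_of_mem_admissible (hv : IsAreaSeq v)
    (hc : c ∈ admissible v) :
    (admissible (ins v c)).length = (admissible v).idxOf c + 2 := by
  have hcle := le_length_of_mem_admissible hc
  rcases eq_or_ne v [] with rfl | hw
  · obtain rfl : c = 0 := by simpa [admissible] using hc
    simp [admissible, ins, Maxb, Maxa, maxVal, get1]
  rcases (mem_admissible hw).1 hc with h | h | rfl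
  · have hx := insLetter_of_mem_Maxb h
    have hcount : v.count (maxVal v + 1) = 0 :=
      List.count_eq_zero.2 fun hm => by have := le_maxVal hm; omega
    have hMaxaAt : MaxaAt v (maxVal v + 1) = Maxb v := by
      ext i
      simp only [mem_MaxaAt, mem_Maxb, add_left_inj, and_congr_right_iff, and_iff_left_iff_imp]
      exact fun _ _ j _ _ => Nat.lt_succ_of_le (get1_le_maxVal v j)
    rw [length_admissible_ins hcle (insLetter_eq_maxVal_ins (by omega)), hx, hcount, hMaxaAt,
      idxOf_admissible_of_mem_Maxb h]
    omega
  · have hx := insLetter_of_mem_Maxa h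
    rw [length_admissible_ins hcle (insLetter_eq_maxVal_ins hx.ge), hx, ← card_Maxb,
      ← Maxa_eq_MaxaAt, idxOf_admissible_of_mem_Maxa h]
  · have hx := hv.insLetter_pred_i0 hw
    obtain ⟨⟨hz, hlen⟩, hval, -⟩ := mem_maxBlockStarts.1 (i0_mem_maxBlockStarts hw)
    have hfilter : (Maxa v).filter (i0 v - 1 < ·) = Maxa v := filter_true_of_mem fun i hi => by
      obtain ⟨-, hvi, hafter⟩ := mem_Maxa.1 hi
      by_contra
      have := hafter (i0 v) (by omega) hlen
      omega
    rw [length_admissible_ins hcle (insLetter_eq_maxVal_ins hx.ge), hx, ← card_Maxb,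
      ← Maxa_eq_MaxaAt, hfilter, idxOf_admissible_pred_i0 hw]

end Step

section Psi

variable {w : List ℕ} {a : ℕ}

lemma psi_append_singleton (u : List ℕ) (a : ℕ) :
    psi (u ++ [a]) = ins (psi u) ((admissible (psi u)).getD a 0) := by
  rw [psi, List.reverse_append]
  rfl

lemma getD_admissible_le_length (w : List ℕ) (a : ℕ) :
    (admissible w).getD a 0 ≤ w.length := by
  rw [List.getD_eq_getElem?_getD]
  cases h : (admissible w)[a]? with
  | none => exact Nat.zero_le _
  | some c => exact le_length_of_mem_admissible (List.mem_of_getElem? h)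

lemma length_psi (w : List ℕ) : (psi w).length = w.length := by
  induction w using List.reverseRecOn with
  | nil => rfl
  | append_singleton u a ih =>
    rw [psi_append_singleton, length_ins (getD_admissible_le_length _ _), ih,
      List.length_append, List.length_singleton]

lemma isAreaSeq_psi (hw : IsAreaSeq w) : IsAreaSeq (psi w) := by
  induction w using List.reverseRecOn with
  | nil => exact hw
  | append_singleton u a ih =>
    rw [psi_append_singleton]
    exact isAreaSeq_ins (ih hw.of_append) (getD_admissible_le_length _ _)

lemma IsAreaSeq.lt_length_admissible_psi (h : IsAreaSeq (w ++ [a])) :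
    a < (admissible (psi w)).length := by
  induction w using List.reverseRecOn generalizing a with
  | nil => simp [h.eq_zero_of_singleton, psi, psiRev, admissible]
  | append_singleton u b ih =>
    have hub : IsAreaSeq (u ++ [b]) := h.of_append
    have hb := ih hub
    have hab := h.le_succ_of_append_singleton (by simp)
    rw [List.length_append, List.length_singleton, get1_concat_length] at hab
    rw [psi_append_singleton, (isAreaSeq_psi hub.of_append).length_admissible_ins_of_mem_admissible
      (List.getD_mem_of_lt hb), (nodup_admissible _).idxOf_getD hb]
    omega

lemma psi_injOn : Set.InjOn psi {w | IsAreaSeq w} := by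
  intro w (hw : IsAreaSeq w) w' (hw' : IsAreaSeq w') h
  induction w using List.reverseRecOn generalizing w' with
  | nil => simpa [eq_comm, ← List.length_eq_zero_iff, length_psi] using congrArg List.length h
  | append_singleton u a ih =>
    obtain rfl | ⟨u', a', rfl⟩ := List.eq_nil_or_concat' w'
    · simpa [← List.length_eq_zero_iff, length_psi] using congrArg List.length h
    have ha := hw.lt_length_admissible_psi
    have ha' := hw'.lt_length_admissible_psi
    have hpu := isAreaSeq_psi hw.of_append
    have hpu' := isAreaSeq_psi hw'.of_append
    rw [psi_append_singleton, psi_append_singleton] at h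
    set c := (admissible (psi u)).getD a 0
    set c' := (admissible (psi u')).getD a' 0
    have hc : c ∈ admissible (psi u) := List.getD_mem_of_lt ha
    have hc' : c' ∈ admissible (psi u') := List.getD_mem_of_lt ha'
    have hcc : c = c' := by
      simpa [hpu.i0_ins_of_mem_admissible hc, hpu'.i0_ins_of_mem_admissible hc'] using
        congrArg i0 h
    have hpsi : psi u = psi u' := calc
      psi u = (ins (psi u) c).eraseIdx c := (eraseIdx_ins (le_length_of_mem_admissible hc)).symm
      _ = (ins (psi u') c').eraseIdx c' := by rw [h, hcc]
      _ = psi u' := eraseIdx_ins (le_length_of_mem_admissible hc')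
    obtain rfl := ih hw.of_append hw'.of_append hpsi
    have haa : a = a' := by
      rw [← (nodup_admissible _).idxOf_getD (d := 0) ha,
        ← (nodup_admissible _).idxOf_getD (d := 0) ha']
      exact congrArg (List.idxOf · (admissible (psi u))) hcc
    rw [haa]

end Psi

lemma finite_setOf_isAreaSeq_length (n : ℕ) : {w | IsAreaSeq w ∧ w.length = n}.Finite := by
  refine ((List.finite_length_eq (Fin n) n).image (List.map Fin.val)).subset ?_
  rintro w ⟨hw, hlen⟩
  have hbound : ∀ x ∈ w, x < n := fun x hx => hlen ▸ hw.lt_length_of_mem hx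
  lift w to List (Fin n) using hbound
  exact ⟨w, by simpa using hlen, rfl⟩

/-- The map `ψ` restricts to a bijection from the set of area sequences of
size `n` onto itself. -/
theorem psi_bijOn (n : ℕ) :
    Set.BijOn psi {w : List ℕ | IsAreaSeq w ∧ w.length = n}
      {w : List ℕ | IsAreaSeq w ∧ w.length = n} := by
  have hmaps : Set.MapsTo psi {w : List ℕ | IsAreaSeq w ∧ w.length = n}
      {w : List ℕ | IsAreaSeq w ∧ w.length = n} :=
    fun w hw => ⟨isAreaSeq_psi hw.1, (length_psi w).trans hw.2⟩
  exact ((finite_setOf_isAreaSeq_length n).injOn_iff_bijOn_of_mapsTo hmaps).1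
    (psi_injOn.mono fun w hw => hw.1)
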